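/- arXiv:2203.04527 — 2 statements merged into one kernel-verified Lean document; each statement's English description precedes it below -/
import Mathlib

section
/- Let T_k: H → H be α_k-averaged with α_k ∈ (0,1], λ_k ∈ [0, 1/α_k], η_k ≥ 0, e_k ∈ H, and define x_{k+1} = (1−λ_k)x_k + λ_k T_k x_k + η_k e_k from x_0 ∈ H. Suppose ∩_k Fix T_k ≠ ∅ and ∑ η_k‖e_k‖ < ∞. Then ∑_k λ_k(1/α_k − λ_k)‖x_k − T_k x_k‖² < ∞, and for every x̄ ∈ ∩_k Fix T_k the limit lim_k ‖x_k − x̄‖ exists. -/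
variable {H : Type*} [NormedAddCommGroup H] [InnerProductSpace ℝ H] [CompleteSpace H]

/-- An operator is nonexpansive if it is 1-Lipschitz. -/
def Nonexpansive (T : H → H) : Prop := ∀ x y : H, ‖T x - T y‖ ≤ ‖x - y‖

/-- `T` is `α`-averaged: `T = (1-α)•Id + α•R` for some nonexpansive `R`. -/
def Averaged (α : ℝ) (T : H → H) : Prop :=
  ∃ R : H → H, Nonexpansive R ∧ ∀ x : H, T x = (1 - α) • x + α • R x

/-- A set-valued operator is monotone. -/
def MonotoneOp (A : H → Set H) : Prop :=
  ∀ x u y v : H, u ∈ A x → v ∈ A y → (0 : ℝ) ≤ inner ℝ (x - y) (u - v)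

/-- Maximal monotonicity. -/
def MaxMonotone (A : H → Set H) : Prop :=
  MonotoneOp A ∧ ∀ x u : H, (∀ y v : H, v ∈ A y → (0 : ℝ) ≤ inner ℝ (x - y) (u - v)) → u ∈ A x

/-- `J` is the resolvent of `γ • A`, i.e. `J = (Id + γA)⁻¹`:
for every `x`, `(1/γ)(x - J x) ∈ A (J x)` (so `x ∈ (Id + γA)(J x)`). -/
def IsResolvent (γ : ℝ) (A : H → Set H) (J : H → H) : Prop :=
  ∀ x : H, γ⁻¹ • (x - J x) ∈ A (J x)

/-- Weak convergence of a sequence in a Hilbert space. -/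
def WeakConv (y : ℕ → H) (p : H) : Prop :=
  ∀ u : H, Filter.Tendsto (fun k => (inner ℝ (y k) u : ℝ)) Filter.atTop (nhds (inner ℝ p u))


/-!
Fix `x̄ ∈ ⋂ Fix T_k`, put `y_k = (1-λ_k) x_k + λ_k T_k x_k` and write `T_k = (1-α_k) Id + α_k R_k`.
Then `y_k - x̄ = (1-λ_kα_k)(x_k - x̄) + λ_kα_k(R_k x_k - x̄)`, and the identity
`‖(1-μ)a + μb‖² = (1-μ)‖a‖² + μ‖b‖² - μ(1-μ)‖a-b‖²` with nonexpansiveness of `R_k` gives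
`‖y_k - x̄‖² ≤ ‖x_k - x̄‖² - λ_k(1/α_k - λ_k)‖x_k - T_k x_k‖²`.
Since `∑ ‖η_k e_k‖ < ∞`, the distances `‖x_k - x̄‖` stay bounded, so their squares satisfy a
quasi-Fejér inequality with summable errors; for real sequences this forces the subtracted terms
to be summable and the sequence to converge.
-/

open Filter Topology

section RealSequences

variable {a c δ : ℕ → ℝ}

lemma le_add_tsum_of_succ_le_add (hδ0 : ∀ k, 0 ≤ δ k) (hδ : Summable δ)
    (h : ∀ k, a (k + 1) ≤ a k + δ k) (n : ℕ) : a n ≤ a 0 + ∑' k, δ k := by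
  have partial_sum : a n ≤ a 0 + ∑ k ∈ Finset.range n, δ k := by
    induction n with
    | zero => simp
    | succ n ih => rw [Finset.sum_range_succ]; linarith [h n]
  linarith [hδ.sum_le_tsum (Finset.range n) fun k _ => hδ0 k]

lemma summable_and_tendsto_of_succ_add_le_add (ha : ∀ k, 0 ≤ a k) (hc : ∀ k, 0 ≤ c k)
    (hδ0 : ∀ k, 0 ≤ δ k) (hδ : Summable δ) (h : ∀ k, a (k + 1) + c k ≤ a k + δ k) :
    Summable c ∧ ∃ L, Tendsto a atTop (𝓝 L) := by
  constructor
  · refine summable_of_sum_range_le (c := a 0 + ∑' k, δ k) hc fun n => ?_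
    have := le_add_tsum_of_succ_le_add (a := fun n => a n + ∑ k ∈ Finset.range n, c k) hδ0 hδ
      (fun k => by simp only [Finset.sum_range_succ]; linarith [h k]) n
    simp only [Finset.range_zero, Finset.sum_empty, add_zero] at this
    linarith [ha n]
  · set u : ℕ → ℝ := fun n => a n - ∑ k ∈ Finset.range n, δ k
    have hu_anti : Antitone u := antitone_nat_of_succ_le fun n => by
      simp only [u, Finset.sum_range_succ]; linarith [h n, hc n]
    have hu_bdd : BddBelow (Set.range u) := ⟨-∑' k, δ k, by
      rintro _ ⟨n, rfl⟩
      linarith [ha n, hδ.sum_le_tsum (Finset.range n) fun k _ => hδ0 k]⟩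
    refine ⟨(⨅ n, u n) + ∑' k, δ k, ?_⟩
    convert (tendsto_atTop_ciInf hu_anti hu_bdd).add hδ.hasSum.tendsto_sum_nat using 1
    ext n
    simp [u]

lemma sq_le_sq_add_of_le_add {p q δ M : ℝ} (hp0 : 0 ≤ p) (hq : 0 ≤ q) (hδ : 0 ≤ δ)
    (hpM : p ≤ M) (hqM : q ≤ M) (hp : p ≤ q + δ) : p ^ 2 ≤ q ^ 2 + 2 * M * δ := by
  nlinarith

lemma summable_and_tendsto_of_le_add {d q : ℕ → ℝ} (hd : ∀ k, 0 ≤ d k) (hq : ∀ k, 0 ≤ q k)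
    (hc : ∀ k, 0 ≤ c k) (hδ0 : ∀ k, 0 ≤ δ k) (hδ : Summable δ)
    (hfejer : ∀ k, q k ^ 2 + c k ≤ d k ^ 2) (hstep : ∀ k, d (k + 1) ≤ q k + δ k) :
    Summable c ∧ ∃ L, Tendsto d atTop (𝓝 L) := by
  have hqd : ∀ k, q k ≤ d k := fun k =>
    (pow_le_pow_iff_left₀ (hq k) (hd k) two_ne_zero).1 (by linarith [hfejer k, hc k])
  set M := d 0 + ∑' k, δ k
  have hdM : ∀ k, d k ≤ M :=
    le_add_tsum_of_succ_le_add hδ0 hδ fun k => by linarith [hstep k, hqd k]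
  have hsq : ∀ k, d (k + 1) ^ 2 + c k ≤ d k ^ 2 + 2 * M * δ k := fun k => by
    linarith [hfejer k, sq_le_sq_add_of_le_add (hd (k + 1)) (hq k) (hδ0 k) (hdM (k + 1))
      ((hqd k).trans (hdM k)) (hstep k)]
  obtain ⟨hc_sum, L, hL⟩ := summable_and_tendsto_of_succ_add_le_add (fun k => sq_nonneg (d k)) hc
    (fun k => mul_nonneg (by linarith [hd 0, hdM 0]) (hδ0 k)) (hδ.mul_left (2 * M)) hsq
  refine ⟨hc_sum, √L, ?_⟩
  simpa [Real.sqrt_sq (hd _)] using hL.sqrt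

end RealSequences

section Hilbert

variable {E : Type*} [NormedAddCommGroup E] [InnerProductSpace ℝ E]

lemma norm_one_sub_smul_add_smul_sq (μ : ℝ) (a b : E) :
    ‖(1 - μ) • a + μ • b‖ ^ 2 = (1 - μ) * ‖a‖ ^ 2 + μ * ‖b‖ ^ 2 - μ * (1 - μ) * ‖a - b‖ ^ 2 := by
  rw [norm_add_sq_real, norm_sub_sq_real, real_inner_smul_left, real_inner_smul_right,
    norm_smul, norm_smul, Real.norm_eq_abs, Real.norm_eq_abs, mul_pow, mul_pow, sq_abs, sq_abs]
  ring

lemma Averaged.exists_nonexpansive_fixing {α : ℝ} {T : E → E} (hα : α ≠ 0) (hT : Averaged α T)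
    {z : E} (hz : T z = z) :
    ∃ R : E → E, Nonexpansive R ∧ (∀ x, T x = (1 - α) • x + α • R x) ∧ R z = z := by
  obtain ⟨R, hR, hTR⟩ := hT
  refine ⟨R, hR, hTR, smul_right_injective E hα ?_⟩
  have := hTR z
  rw [hz] at this
  calc α • R z = (1 - α) • z + α • R z - (1 - α) • z := by abel
    _ = α • z := by rw [← this]; module

lemma Averaged.norm_relaxed_sub_fixed_sq_le {α lam : ℝ} {T : E → E} (hα : 0 < α)
    (hT : Averaged α T) (hlam : 0 ≤ lam) {z : E} (hz : T z = z) (x : E) :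
    ‖(1 - lam) • x + lam • T x - z‖ ^ 2 + lam * (1 / α - lam) * ‖x - T x‖ ^ 2 ≤ ‖x - z‖ ^ 2 := by
  obtain ⟨R, hR, hTR, hRz⟩ := hT.exists_nonexpansive_fixing hα.ne' hz
  have hRx : ‖R x - z‖ ^ 2 ≤ ‖x - z‖ ^ 2 := by
    have := hR x z
    rw [hRz] at this
    gcongr
  have hrelaxed :
      (1 - lam) • x + lam • T x - z = (1 - lam * α) • (x - z) + (lam * α) • (R x - z) := by
    rw [hTR]; module
  have hresidual : x - T x = α • (x - R x) := by rw [hTR]; module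
  have hcoeff : lam * (1 / α - lam) * α ^ 2 = lam * α * (1 - lam * α) := by field_simp
  rw [hrelaxed, norm_one_sub_smul_add_smul_sq, sub_sub_sub_cancel_right, hresidual, norm_smul,
    Real.norm_eq_abs, mul_pow, sq_abs, ← mul_assoc, hcoeff]
  nlinarith [mul_nonneg hlam hα.le]

end Hilbert

theorem stmt15_general (α : ℕ → ℝ) (hα0 : ∀ k, 0 < α k)
    (T : ℕ → H → H) (hT : ∀ k, Averaged (α k) (T k))
    (lam : ℕ → ℝ) (hlam0 : ∀ k, 0 ≤ lam k) (hlam1 : ∀ k, lam k ≤ 1 / α k)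
    (η : ℕ → ℝ) (hη : ∀ k, 0 ≤ η k) (e : ℕ → H)
    (x : ℕ → H)
    (hx : ∀ k, x (k + 1) = (1 - lam k) • x k + lam k • T k (x k) + (η k) • e k)
    (hC : ∃ z : H, ∀ k, T k z = z)
    (hsum : Summable fun k => η k * ‖e k‖) :
    (Summable fun k => lam k * (1 / α k - lam k) * ‖x k - T k (x k)‖ ^ 2) ∧
    ∀ xb : H, (∀ k, T k xb = xb) →
      ∃ L : ℝ, Filter.Tendsto (fun k => ‖x k - xb‖) Filter.atTop (nhds L) := by
  have dist_succ_le (z : H) (k : ℕ) :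
      ‖x (k + 1) - z‖ ≤ ‖(1 - lam k) • x k + lam k • T k (x k) - z‖ + η k * ‖e k‖ :=
    calc ‖x (k + 1) - z‖ = ‖((1 - lam k) • x k + lam k • T k (x k) - z) + η k • e k‖ := by
          rw [hx, add_sub_right_comm]
      _ ≤ _ := norm_add_le _ _
      _ = _ := by rw [norm_smul, Real.norm_of_nonneg (hη k)]
  have fejer (z : H) (hz : ∀ k, T k z = z) :
      (Summable fun k => lam k * (1 / α k - lam k) * ‖x k - T k (x k)‖ ^ 2) ∧
        ∃ L : ℝ, Tendsto (fun k => ‖x k - z‖) atTop (𝓝 L) :=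
    summable_and_tendsto_of_le_add (fun _ => norm_nonneg _) (fun _ => norm_nonneg _)
      (fun k => mul_nonneg (mul_nonneg (hlam0 k) (sub_nonneg.2 (hlam1 k))) (sq_nonneg _))
      (fun k => mul_nonneg (hη k) (norm_nonneg _)) hsum
      (fun k => (hT k).norm_relaxed_sub_fixed_sq_le (hα0 k) (hlam0 k) (hz k) (x k))
      (dist_succ_le z)
  obtain ⟨z, hz⟩ := hC
  exact ⟨(fejer z hz).1, fun xb hxb => (fejer xb hxb).2⟩

theorem stmt15 (α : ℕ → ℝ) (hα0 : ∀ k, 0 < α k) (hα1 : ∀ k, α k ≤ 1)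
    (T : ℕ → H → H) (hT : ∀ k, Averaged (α k) (T k))
    (lam : ℕ → ℝ) (hlam0 : ∀ k, 0 ≤ lam k) (hlam1 : ∀ k, lam k ≤ 1 / α k)
    (η : ℕ → ℝ) (hη : ∀ k, 0 ≤ η k) (e : ℕ → H)
    (x : ℕ → H)
    (hx : ∀ k, x (k + 1) = (1 - lam k) • x k + lam k • T k (x k) + (η k) • e k)
    (hC : ∃ z : H, ∀ k, T k z = z)
    (hsum : Summable fun k => η k * ‖e k‖) :
    (Summable fun k => lam k * (1 / α k - lam k) * ‖x k - T k (x k)‖ ^ 2) ∧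
    ∀ xb : H, (∀ k, T k xb = xb) →
      ∃ L : ℝ, Filter.Tendsto (fun k => ‖x k - xb‖) Filter.atTop (nhds L) :=
  stmt15_general α hα0 T hT lam hlam0 hlam1 η hη e x hx hC hsum
end

section
/- Let T_k: H → H be α_k-averaged with α_k ∈ (0,1], C = ∩_k Fix T_k ≠ ∅, λ_k ∈ (0, 1/α_k), and x_{k+1} = (1−λ_k)x_k + λ_k T_k x_k. Suppose each Id − T_k is metrically subregular at a common point x̄ ∈ C for 0 with constant γ_k on B[x̄;δ_k], δ := inf_k δ_k > 0, x_0 ∈ B[x̄;δ]. Then for all k: x_k ∈ B[x̄;δ] and d(x_{k+1}, Fix T_k) ≤ ρ_k d(x_k, Fix T_k), where ρ_k = (1 − λ_k(1−λ_k α_k)/(α_k γ_k²))^{1/2}. -/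
variable {H : Type*} [NormedAddCommGroup H] [InnerProductSpace ℝ H] [CompleteSpace H]

/-! Relaxing an `α`-averaged map `T = (1 - α) Id + α R` with step `λ` is relaxing its nonexpansive
part `R` with step `λα`. This gives the descent inequality
`‖x_{k+1} - z‖² + λ(1 - λα)/α ‖x_k - T x_k‖² ≤ ‖x_k - z‖²` for every fixed point `z`. With
`z = x̄` it keeps the iterates in `B[x̄; δ]`; taking the infimum over `z` and bounding
`d(x_k, Fix T_k) ≤ γ_k ‖x_k - T x_k‖` by subregularity gives the rate `ρ_k`. -/

section Relaxation

variable {E : Type*} [NormedAddCommGroup E] [InnerProductSpace ℝ E]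

lemma norm_sub_smul_add_smul_sq (t : ℝ) (a b : E) :
    ‖(1 - t) • a + t • b‖ ^ 2 =
      (1 - t) * ‖a‖ ^ 2 + t * ‖b‖ ^ 2 - t * (1 - t) * ‖a - b‖ ^ 2 := by
  simp only [← real_inner_self_eq_norm_sq, inner_add_left, inner_add_right, inner_sub_left,
    inner_sub_right, real_inner_smul_left, real_inner_smul_right, real_inner_comm a b]
  ring

lemma Nonexpansive.norm_relax_sub_sq_add_le {R : E → E} (hR : Nonexpansive R) {t : ℝ}
    (ht : 0 ≤ t) {z : E} (hz : R z = z) (x : E) :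
    ‖((1 - t) • x + t • R x) - z‖ ^ 2 + t * (1 - t) * ‖x - R x‖ ^ 2 ≤ ‖x - z‖ ^ 2 := by
  have hRx : ‖R x - z‖ ^ 2 ≤ ‖x - z‖ ^ 2 := by
    simpa [hz] using pow_le_pow_left₀ (norm_nonneg _) (hR x z) 2
  have key := norm_sub_smul_add_smul_sq t (x - z) (R x - z)
  rw [show (1 - t) • (x - z) + t • (R x - z) = ((1 - t) • x + t • R x) - z by module,
    sub_sub_sub_cancel_right] at key
  nlinarith

lemma Averaged.norm_relax_sub_sq_add_le {α : ℝ} {T : E → E} (hT : Averaged α T) (hα : 0 < α)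
    {l : ℝ} (hl : 0 ≤ l) {z : E} (hz : T z = z) (x : E) :
    ‖((1 - l) • x + l • T x) - z‖ ^ 2 + l * (1 - l * α) / α * ‖x - T x‖ ^ 2 ≤ ‖x - z‖ ^ 2 := by
  obtain ⟨R, hR, hTR⟩ := hT
  have hRz : R z = z := by
    have h : α • (R z - z) = 0 := by
      rw [show α • (R z - z) = ((1 - α) • z + α • R z) - z by module, ← hTR, hz, sub_self]
    simpa [hα.ne', sub_eq_zero] using h
  -- a relaxation of `T` with parameter `l` is a relaxation of `R` with parameter `l * α`
  have hstep : (1 - l) • x + l • T x = (1 - l * α) • x + (l * α) • R x := by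
    rw [hTR]; module
  have hres : ‖x - T x‖ ^ 2 = α ^ 2 * ‖x - R x‖ ^ 2 := by
    rw [hTR, show x - ((1 - α) • x + α • R x) = α • (x - R x) by module, norm_smul,
      Real.norm_of_nonneg hα.le, mul_pow]
  have hgain : l * (1 - l * α) / α * ‖x - T x‖ ^ 2 = l * α * (1 - l * α) * ‖x - R x‖ ^ 2 := by
    rw [hres]; field_simp
  rw [hstep, hgain]
  exact hR.norm_relax_sub_sq_add_le (by positivity) hRz x

end Relaxation

lemma Metric.sq_infDist_add_le_of_forall {X : Type*} [SeminormedAddCommGroup X] {F : Set X}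
    (hF : F.Nonempty) {x y : X} {c : ℝ} (h : ∀ z ∈ F, ‖y - z‖ ^ 2 + c ≤ ‖x - z‖ ^ 2) :
    infDist y F ^ 2 + c ≤ infDist x F ^ 2 := by
  have hsqrt : √(infDist y F ^ 2 + c) ≤ infDist x F := by
    refine (le_infDist hF).2 fun z hz => ?_
    rw [dist_eq_norm, Real.sqrt_le_iff]
    refine ⟨norm_nonneg _, le_trans ?_ (h z hz)⟩
    gcongr
    · exact infDist_nonneg
    · simpa [dist_eq_norm] using infDist_le_dist_of_mem (x := y) hz
  exact (Real.sqrt_le_iff.1 hsqrt).2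

lemma le_sqrt_one_sub_div_mul {d₀ d₁ c γ r : ℝ} (hd₀ : 0 ≤ d₀) (hd₁ : 0 ≤ d₁) (hc : 0 ≤ c)
    (hγ : 0 < γ) (hdesc : d₁ ^ 2 + c * r ^ 2 ≤ d₀ ^ 2) (hreg : d₀ ≤ γ * r) :
    d₁ ≤ √(1 - c / γ ^ 2) * d₀ := by
  have hreg' : c / γ ^ 2 * d₀ ^ 2 ≤ c * r ^ 2 := by
    rw [div_mul_eq_mul_div, div_le_iff₀ (by positivity), mul_assoc, ← mul_pow, mul_comm r]
    gcongr
  have hsq : d₁ ^ 2 ≤ (1 - c / γ ^ 2) * d₀ ^ 2 := by linarith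
  calc d₁ = √(d₁ ^ 2) := (Real.sqrt_sq hd₁).symm
    _ ≤ √((1 - c / γ ^ 2) * d₀ ^ 2) := Real.sqrt_le_sqrt hsq
    _ = √(1 - c / γ ^ 2) * d₀ := by rw [Real.sqrt_mul' _ (sq_nonneg _), Real.sqrt_sq hd₀]

theorem stmt17_general (α : ℕ → ℝ) (hα0 : ∀ k, 0 < α k)
    (T : ℕ → H → H) (hT : ∀ k, Averaged (α k) (T k))
    (xb : H) (hxb : ∀ k, T k xb = xb)
    (lam : ℕ → ℝ) (hlam0 : ∀ k, 0 < lam k) (hlam1 : ∀ k, lam k < 1 / α k)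
    (x : ℕ → H) (hx : ∀ k, x (k + 1) = (1 - lam k) • x k + lam k • T k (x k))
    (γ δk : ℕ → ℝ) (hγ : ∀ k, 0 < γ k)
    (hsub : ∀ k, ∀ z : H, ‖z - xb‖ ≤ δk k →
      Metric.infDist z {w : H | T k w = w} ≤ γ k * ‖z - T k z‖)
    (δ : ℝ) (hδinf : ∀ k, δ ≤ δk k)
    (hx0 : ‖x 0 - xb‖ ≤ δ) :
    ∀ k : ℕ, ‖x k - xb‖ ≤ δ ∧
      Metric.infDist (x (k + 1)) {w : H | T k w = w} ≤
        Real.sqrt (1 - lam k * (1 - lam k * α k) / (α k * (γ k) ^ 2)) *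
          Metric.infDist (x k) {w : H | T k w = w} := by
  have hgain : ∀ k, 0 ≤ lam k * (1 - lam k * α k) / α k := fun k =>
    div_nonneg (mul_nonneg (hlam0 k).le
      (sub_nonneg.2 ((lt_div_iff₀ (hα0 k)).1 (hlam1 k)).le)) (hα0 k).le
  have hdesc : ∀ k z, T k z = z → ‖x (k + 1) - z‖ ^ 2 +
      lam k * (1 - lam k * α k) / α k * ‖x k - T k (x k)‖ ^ 2 ≤ ‖x k - z‖ ^ 2 := fun k z hz => by
    rw [hx k]; exact (hT k).norm_relax_sub_sq_add_le (hα0 k) (hlam0 k).le hz (x k)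
  have hfejer : ∀ k, ‖x (k + 1) - xb‖ ≤ ‖x k - xb‖ := fun k =>
    (pow_le_pow_iff_left₀ (norm_nonneg _) (norm_nonneg _) two_ne_zero).1 <| by
      linarith [hdesc k xb (hxb k), mul_nonneg (hgain k) (sq_nonneg ‖x k - T k (x k)‖)]
  have hball : ∀ k, ‖x k - xb‖ ≤ δ := fun k => by
    induction k with
    | zero => exact hx0
    | succ k ih => exact (hfejer k).trans ih
  intro k
  set F := {w : H | T k w = w}
  have hdist : Metric.infDist (x (k + 1)) F ^ 2 +
      lam k * (1 - lam k * α k) / α k * ‖x k - T k (x k)‖ ^ 2 ≤ Metric.infDist (x k) F ^ 2 :=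
    Metric.sq_infDist_add_le_of_forall (F := F) ⟨xb, hxb k⟩ fun z hz => hdesc k z hz
  refine ⟨hball k, ?_⟩
  rw [← div_div]
  exact le_sqrt_one_sub_div_mul Metric.infDist_nonneg Metric.infDist_nonneg (hgain k) (hγ k)
    hdist (hsub k (x k) ((hball k).trans (hδinf k)))

theorem stmt17 (α : ℕ → ℝ) (hα0 : ∀ k, 0 < α k) (hα1 : ∀ k, α k ≤ 1)
    (T : ℕ → H → H) (hT : ∀ k, Averaged (α k) (T k))
    (xb : H) (hxb : ∀ k, T k xb = xb)
    (lam : ℕ → ℝ) (hlam0 : ∀ k, 0 < lam k) (hlam1 : ∀ k, lam k < 1 / α k)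
    (x : ℕ → H) (hx : ∀ k, x (k + 1) = (1 - lam k) • x k + lam k • T k (x k))
    (γ δk : ℕ → ℝ) (hγ : ∀ k, 0 < γ k) (hδk : ∀ k, 0 < δk k)
    (hsub : ∀ k, ∀ z : H, ‖z - xb‖ ≤ δk k →
      Metric.infDist z {w : H | T k w = w} ≤ γ k * ‖z - T k z‖)
    (δ : ℝ) (hδ0 : 0 < δ) (hδinf : ∀ k, δ ≤ δk k)
    (hx0 : ‖x 0 - xb‖ ≤ δ) :
    ∀ k : ℕ, ‖x k - xb‖ ≤ δ ∧
      Metric.infDist (x (k + 1)) {w : H | T k w = w} ≤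
        Real.sqrt (1 - lam k * (1 - lam k * α k) / (α k * (γ k) ^ 2)) *
          Metric.infDist (x k) {w : H | T k w = w} :=
  stmt17_general α hα0 T hT xb hxb lam hlam0 hlam1 x hx γ δk hγ hsub δ hδinf hx0
end
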